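/- arXiv:0909.3940 — 3 statements merged into one kernel-verified Lean document; each statement's English description precedes it below -/
import Mathlib

section
/- Let 𝒜 and ℬ be monoidal categories and let f_*, g_*, h_* : 𝒜 ⥤ ℬ be functors admitting left adjoints f^*, g^*, h^* : ℬ ⥤ 𝒜. Then there is a bijection between cup-pairings f_* ∪ g_* → h_* (families of morphisms f_*A ⊗ g_*B ⟶ h_*(A ⊗ B), natural in A, B ∈ 𝒜) and cap-pairings h^* → f^* ∩ g^* (families of morphisms h^*(X ⊗ Y) ⟶ f^*X ⊗ g^*Y, natural in X, Y ∈ ℬ). Concretely, a cup-pairing η is sent to the cap-pairing obtained as the adjoint (under h^* ⊣ h_*) of the composite X ⊗ Y → f_*f^*X ⊗ g_*g^*Y → h_*(f^*X ⊗ g^*Y), where the first map is the tensor product of the adjunction units and the second is η; the inverse construction is given by the dual ('adjoint') procedure, and these two constructions are mutually inverse. -/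
/-!
STATEMENT 0: For monoidal categories `𝒜`, `ℬ` and functors `f_*, g_*, h_* : 𝒜 ⥤ ℬ` with
left adjoints `f^*, g^*, h^* : ℬ ⥤ 𝒜`, there is a bijection between cup-pairings
`f_* ∪ g_* → h_*` and cap-pairings `h^* → f^* ∩ g^*`, sending a cup-pairing `η` to the
cap-pairing adjoint (under `h^* ⊣ h_*`) to the composite
`X ⊗ Y → f_*f^*X ⊗ g_*g^*Y → h_*(f^*X ⊗ g^*Y)`.
-/

open CategoryTheory MonoidalCategory

universe v₁ v₂ u₁ u₂

variable {A : Type u₁} {B : Type u₂} [Category.{v₁} A] [Category.{v₂} B]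
  [MonoidalCategory A] [MonoidalCategory B]

/-- A cup-pairing of functors `f ∪ g → h`: a family of morphisms
`f A ⊗ g B ⟶ h (A ⊗ B)` natural in the pair `(A, B)`. -/
structure CupPairing (f g h : A ⥤ B) where
  app : ∀ X Y : A, f.obj X ⊗ g.obj Y ⟶ h.obj (X ⊗ Y)
  naturality : ∀ {X X' Y Y' : A} (a : X ⟶ X') (b : Y ⟶ Y'),
    (f.map a ⊗ₘ g.map b) ≫ app X' Y' = app X Y ≫ h.map (a ⊗ₘ b)

/-- A cap-pairing of functors `h → f ∩ g`: a family of morphisms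
`h (X ⊗ Y) ⟶ f X ⊗ g Y` natural in the pair `(X, Y)`. -/
structure CapPairing (f g h : B ⥤ A) where
  app : ∀ X Y : B, h.obj (X ⊗ Y) ⟶ f.obj X ⊗ g.obj Y
  naturality : ∀ {X X' Y Y' : B} (a : X ⟶ X') (b : Y ⟶ Y'),
    h.map (a ⊗ₘ b) ≫ app X' Y' = app X Y ≫ (f.map a ⊗ₘ g.map b)

/-! Both constructions are conjugation by the adjunction hom-equivalences; moving the units and
counits across a pairing by its naturality, each round trip collapses by the triangle identities. -/

attribute [ext] CupPairing CapPairing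

section

variable {f g h : A ⥤ B} {f' g' h' : B ⥤ A} (adjF : f' ⊣ f) (adjG : g' ⊣ g) (adjH : h' ⊣ h)

@[simps]
noncomputable def CupPairing.toCapPairing (η : CupPairing f g h) : CapPairing f' g' h' where
  app X Y := (adjH.homEquiv (X ⊗ Y) (f'.obj X ⊗ g'.obj Y)).symm
    ((adjF.unit.app X ⊗ₘ adjG.unit.app Y) ≫ η.app (f'.obj X) (g'.obj Y))
  naturality {X X' Y Y'} a b := by
    rw [← Adjunction.homEquiv_naturality_left_symm, ← Adjunction.homEquiv_naturality_right_symm,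
      ← Category.assoc, tensorHom_comp_tensorHom, ← adjF.unit_naturality, ← adjG.unit_naturality,
      ← tensorHom_comp_tensorHom, Category.assoc, η.naturality, Category.assoc]

@[simps]
noncomputable def CapPairing.toCupPairing (ε : CapPairing f' g' h') : CupPairing f g h where
  app X Y := adjH.homEquiv (f.obj X ⊗ g.obj Y) (X ⊗ Y)
    (ε.app (f.obj X) (g.obj Y) ≫ (adjF.counit.app X ⊗ₘ adjG.counit.app Y))
  naturality {X X' Y Y'} a b := by
    rw [← Adjunction.homEquiv_naturality_left, ← Adjunction.homEquiv_naturality_right,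
      ← Category.assoc, ε.naturality, Category.assoc, Category.assoc, tensorHom_comp_tensorHom,
      adjF.counit_naturality, adjG.counit_naturality, ← tensorHom_comp_tensorHom]

theorem CupPairing.toCupPairing_toCapPairing (η : CupPairing f g h) :
    (η.toCapPairing adjF adjG adjH).toCupPairing adjF adjG adjH = η := by
  ext X Y
  rw [CapPairing.toCupPairing_app, CupPairing.toCapPairing_app,
    Adjunction.homEquiv_naturality_right, Equiv.apply_symm_apply, Category.assoc,
    ← η.naturality, ← Category.assoc, tensorHom_comp_tensorHom, adjF.right_triangle_components,
    adjG.right_triangle_components, id_tensorHom_id, Category.id_comp]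

theorem CapPairing.toCapPairing_toCupPairing (ε : CapPairing f' g' h') :
    (ε.toCupPairing adjF adjG adjH).toCapPairing adjF adjG adjH = ε := by
  ext X Y
  rw [CupPairing.toCapPairing_app, CapPairing.toCupPairing_app,
    Adjunction.homEquiv_naturality_left_symm]
  dsimp only [Functor.comp_obj]
  rw [Equiv.symm_apply_apply, ← Category.assoc, ε.naturality, Category.assoc, tensorHom_comp_tensorHom, adjF.left_triangle_components,
    adjG.left_triangle_components, id_tensorHom_id, Category.comp_id]

noncomputable def cupPairingEquivCapPairing : CupPairing f g h ≃ CapPairing f' g' h' where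
  toFun η := η.toCapPairing adjF adjG adjH
  invFun ε := ε.toCupPairing adjF adjG adjH
  left_inv := CupPairing.toCupPairing_toCapPairing adjF adjG adjH
  right_inv := CapPairing.toCapPairing_toCupPairing adjF adjG adjH

end

theorem cupPairing_equiv_capPairing
    (fs gs hs : A ⥤ B) (fStar gStar hStar : B ⥤ A)
    (adjF : fStar ⊣ fs) (adjG : gStar ⊣ gs) (adjH : hStar ⊣ hs) :
    ∃ e : CupPairing fs gs hs ≃ CapPairing fStar gStar hStar,
      ∀ (η : CupPairing fs gs hs) (X Y : B),
        (e η).app X Y =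
          (adjH.homEquiv (X ⊗ Y) (fStar.obj X ⊗ gStar.obj Y)).symm
            ((adjF.unit.app X ⊗ₘ adjG.unit.app Y) ≫ η.app (fStar.obj X) (gStar.obj Y)) :=
  ⟨cupPairingEquivCapPairing adjF adjG adjH, fun _ _ _ => rfl⟩
end

section
/- Let (C, J) be a small site and let F be a sheaf of abelian groups on (C, J). Define the tensor product of two abelian sheaves as the sheafification of the objectwise tensor product of their underlying presheaves. Then F is flat (the functor F ⊗ − preserves monomorphisms in the category of abelian sheaves) if and only if F is torsion-free (for every integer n ≥ 1 the multiplication-by-n endomorphism n : F → F is a monomorphism of sheaves). -/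
/-!
STATEMENT 4: For a sheaf of abelian groups `F` on a small site `(C, J)`, with the tensor
product of abelian sheaves defined as the sheafification of the objectwise tensor product
of the underlying presheaves, `F` is flat (tensoring with `F` preserves monomorphisms of
sheaves) if and only if `F` is torsion-free (multiplication by every integer `n ≥ 1` is a
monomorphism of sheaves `F → F`).
-/

open CategoryTheory Limits Opposite

universe u

variable {C : Type u} [SmallCategory C]

/-- The objectwise tensor product (over `ℤ`) of two presheaves of abelian groups. -/
noncomputable def presheafTensorObj (P Q : Cᵒᵖ ⥤ AddCommGrpCat.{u}) : Cᵒᵖ ⥤ AddCommGrpCat.{u} where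
  obj U := AddCommGrpCat.of (TensorProduct ℤ (P.obj U) (Q.obj U))
  map f := AddCommGrpCat.ofHom
    (TensorProduct.map (P.map f).hom.toIntLinearMap (Q.map f).hom.toIntLinearMap).toAddMonoidHom
  map_id U := by
    ext x
    refine TensorProduct.induction_on x (by simp) (fun a b => by simp)
      (fun a b ha hb => by simp only [map_add, ha, hb])
  map_comp f g := by
    ext x
    refine TensorProduct.induction_on x (by simp) (fun a b => ?_)
      (fun a b ha hb => by simp only [map_add, ha, hb])
    show (P.map (f ≫ g)) a ⊗ₜ[ℤ] (Q.map (f ≫ g)) b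
        = (P.map g) ((P.map f) a) ⊗ₜ[ℤ] (Q.map g) ((Q.map f) b)
    simp

/-- The morphism of presheaves `P ⊗ Q ⟶ P ⊗ R` induced by `f : Q ⟶ R`. -/
noncomputable def presheafTensorMap (P : Cᵒᵖ ⥤ AddCommGrpCat.{u}) {Q R : Cᵒᵖ ⥤ AddCommGrpCat.{u}}
    (f : Q ⟶ R) : presheafTensorObj P Q ⟶ presheafTensorObj P R where
  app U := AddCommGrpCat.ofHom
    (TensorProduct.map (AddMonoidHom.id _).toIntLinearMap (f.app U).hom.toIntLinearMap).toAddMonoidHom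
  naturality U V g := by
    ext x
    refine TensorProduct.induction_on x (by exact (map_zero _).trans (map_zero _).symm) (fun a b => ?_)
      (fun a b ha hb => by
        exact (map_add _ a b).trans ((congrArg₂ (· + ·) ha hb).trans (map_add _ a b).symm))
    show (P.map g) a ⊗ₜ[ℤ] (f.app V) ((Q.map g) b)
        = (P.map g) a ⊗ₜ[ℤ] (R.map g) ((f.app U) b)
    exact congrArg₂ (· ⊗ₜ[ℤ] ·) rfl (ConcreteCategory.congr_hom (f.naturality g) b)

variable (J : GrothendieckTopology C)

/-- The tensor product of two abelian sheaves: the sheafification of the objectwise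
tensor product of the underlying presheaves. -/
noncomputable def sheafTensorObj (F G : Sheaf J AddCommGrpCat.{u}) : Sheaf J AddCommGrpCat.{u} :=
  (presheafToSheaf J AddCommGrpCat.{u}).obj (presheafTensorObj F.val G.val)

/-- The morphism of abelian sheaves `F ⊗ G ⟶ F ⊗ H` induced by `f : G ⟶ H`. -/
noncomputable def sheafTensorMap (F : Sheaf J AddCommGrpCat.{u}) {G H : Sheaf J AddCommGrpCat.{u}}
    (f : G ⟶ H) : sheafTensorObj J F G ⟶ sheafTensorObj J F H :=
  (presheafToSheaf J AddCommGrpCat.{u}).map (presheafTensorMap F.val f.hom)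

/-- An abelian sheaf is flat if tensoring with it preserves monomorphisms of sheaves. -/
def SheafFlat (F : Sheaf J AddCommGrpCat.{u}) : Prop :=
  ∀ ⦃G H : Sheaf J AddCommGrpCat.{u}⦄ (f : G ⟶ H), Mono f → Mono (sheafTensorMap J F f)

/-- An abelian sheaf is torsion-free if multiplication by every integer `n ≥ 1` is a
monomorphism of sheaves `F → F`. -/
def SheafTorsionFree (F : Sheaf J AddCommGrpCat.{u}) : Prop :=
  ∀ n : ℤ, 1 ≤ n → Mono (n • 𝟙 F)

/-!
Objectwise, a torsion-free abelian group is a flat `ℤ`-module, and sheafification preserves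
monomorphisms, so torsion-free sheaves are flat. Conversely, let `ℤ_J` be the sheafified constant
sheaf. The constant presheaf `ℤ` acts on `F` by `k ↦ k • 𝟙`; this action lands in the internal
endomorphism sheaf of `F`, hence extends to `ℤ_J`, and evaluating it gives a retraction of
`p ↦ p ⊗ 1 : F ⟶ F ⊗ ℤ_J`. As `n` is injective on `ℤ_J`, flatness makes it injective on
`F ⊗ ℤ_J`, hence on its retract `F`.
-/

open TensorProduct

lemma Preadditive.mono_zsmul_id_of_mono {𝒞 : Type*} [Category 𝒞] [Preadditive 𝒞] {X Y : 𝒞}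
    (f : X ⟶ Y) [Mono f] (n : ℤ) [Mono (n • 𝟙 Y)] : Mono (n • 𝟙 X) := by
  have hcomm : (n • 𝟙 X) ≫ f = f ≫ (n • 𝟙 Y) := by simp
  have : Mono ((n • 𝟙 X) ≫ f) := by rw [hcomm]; infer_instance
  exact mono_of_mono _ f

lemma AddCommGrpCat.tensorObj_hom_ext {M N : Type u} [AddCommGroup M] [AddCommGroup N]
    {X : AddCommGrpCat.{u}} {f g : AddCommGrpCat.of (M ⊗[ℤ] N) ⟶ X}
    (h : ∀ m n, f (m ⊗ₜ n) = g (m ⊗ₜ n)) : f = g :=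
  AddCommGrpCat.hom_ext (AddMonoidHom.toIntLinearMap_injective (TensorProduct.ext' h))

lemma mono_zsmul_id_iff_injective (P : Cᵒᵖ ⥤ AddCommGrpCat.{u}) (n : ℤ) :
    Mono (n • 𝟙 P) ↔ ∀ U, Function.Injective fun a : P.obj U => n • a := by
  rw [NatTrans.mono_iff_mono_app]
  exact forall_congr' fun U => AddCommGrpCat.mono_iff_injective _

lemma presheafTensorObj_hom_ext {P Q R : Cᵒᵖ ⥤ AddCommGrpCat.{u}}
    {f g : presheafTensorObj P Q ⟶ R}
    (h : ∀ U (p : P.obj U) (q : Q.obj U), f.app U (p ⊗ₜ q) = g.app U (p ⊗ₜ q)) : f = g := by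
  ext U : 2
  exact AddCommGrpCat.tensorObj_hom_ext (h U)

lemma presheafTensorMap_zsmul_id (P Q : Cᵒᵖ ⥤ AddCommGrpCat.{u}) (n : ℤ) :
    presheafTensorMap P (n • 𝟙 Q) = n • 𝟙 (presheafTensorObj P Q) :=
  presheafTensorObj_hom_ext fun _ p q => TensorProduct.tmul_smul n p q

lemma sheafTensorMap_zsmul_id (F G : Sheaf J AddCommGrpCat.{u}) (n : ℤ) :
    sheafTensorMap J F (n • 𝟙 G) = n • 𝟙 (sheafTensorObj J F G) := by
  change (presheafToSheaf J _).map (presheafTensorMap F.obj (n • 𝟙 G.obj)) = _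
  rw [presheafTensorMap_zsmul_id, Functor.map_zsmul, CategoryTheory.Functor.map_id]
  rfl

instance mono_presheafTensorMap (P : Cᵒᵖ ⥤ AddCommGrpCat.{u}) [∀ U, Module.Flat ℤ (P.obj U)]
    {Q R : Cᵒᵖ ⥤ AddCommGrpCat.{u}} (f : Q ⟶ R) [Mono f] : Mono (presheafTensorMap P f) := by
  rw [NatTrans.mono_iff_mono_app]
  intro U
  rw [AddCommGrpCat.mono_iff_injective]
  exact Module.Flat.lTensor_preserves_injective_linearMap _
    ((AddCommGrpCat.mono_iff_injective _).1 (inferInstance : Mono (f.app U)))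

lemma SheafTorsionFree.isAddTorsionFree {F : Sheaf J AddCommGrpCat.{u}}
    (hF : SheafTorsionFree J F) (U : Cᵒᵖ) : IsAddTorsionFree (F.obj.obj U) := by
  refine ⟨fun n hn => ?_⟩
  have hmono := (Sheaf.Hom.mono_iff_presheaf_mono J _ _).1 (hF n (by omega))
  simpa only [natCast_zsmul] using (mono_zsmul_id_iff_injective F.obj n).1 hmono U

theorem SheafTorsionFree.sheafFlat {F : Sheaf J AddCommGrpCat.{u}} (hF : SheafTorsionFree J F) :
    SheafFlat J F := by
  intro G H f hf
  -- `ℤ` is a Dedekind domain, so the torsion-free groups `F(U)` are flat `ℤ`-modules.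
  have := hF.isAddTorsionFree
  rw [Sheaf.Hom.mono_iff_presheaf_mono] at hf
  exact (presheafToSheaf J AddCommGrpCat.{u}).map_mono (presheafTensorMap F.obj f.hom)

noncomputable def endPresheaf (P : Cᵒᵖ ⥤ AddCommGrpCat.{u}) : Cᵒᵖ ⥤ AddCommGrpCat.{u} where
  obj X := AddCommGrpCat.of ((Over.forget X.unop).op ⋙ P ⟶ (Over.forget X.unop).op ⋙ P)
  map f := AddCommGrpCat.ofHom
    { toFun := (presheafHom P P).map f
      map_zero' := rfl
      map_add' _ _ := rfl }
  map_id X := by ext φ : 2; exact ConcreteCategory.congr_hom ((presheafHom P P).map_id X) φ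
  map_comp f g := by
    ext φ : 2; exact ConcreteCategory.congr_hom ((presheafHom P P).map_comp f g) φ

lemma isSheaf_endPresheaf {P : Cᵒᵖ ⥤ AddCommGrpCat.{u}} (hP : Presheaf.IsSheaf J P) :
    Presheaf.IsSheaf J (endPresheaf P) := by
  rw [Presheaf.isSheaf_iff_isSheaf_forget J _ (forget AddCommGrpCat.{u})]
  exact hP.hom P

abbrev intPresheaf : Cᵒᵖ ⥤ AddCommGrpCat.{u} :=
  (Functor.const Cᵒᵖ).obj (AddCommGrpCat.of (ULift.{u} ℤ))

section Action

variable {P Q : Cᵒᵖ ⥤ AddCommGrpCat.{u}}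

noncomputable def endPresheafPairing (act : Q ⟶ endPresheaf P) (U : Cᵒᵖ) :
    Q.obj U →+ P.obj U →+ P.obj U :=
  (AddCommGrpCat.homAddEquiv.toAddMonoidHom.comp
    (NatTrans.appHom (op (Over.mk (𝟙 U.unop))))).comp (act.app U).hom

noncomputable def presheafTensorAct (act : Q ⟶ endPresheaf P) : presheafTensorObj P Q ⟶ P where
  app U := AddCommGrpCat.ofHom <| liftAddHom (endPresheafPairing act U).flip fun r p q => by
    simp only [AddMonoidHom.flip_apply, map_zsmul, AddMonoidHom.zsmul_apply]
  naturality U V g := AddCommGrpCat.tensorObj_hom_ext fun p q => by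
    change (act.app V (Q.map g q)).app (op (Over.mk (𝟙 V.unop))) (P.map g p) =
      P.map g ((act.app U q).app (op (Over.mk (𝟙 U.unop))) p)
    rw [NatTrans.naturality_apply act g q]
    exact (ConcreteCategory.congr_hom (presheafHom_map_app_op_mk_id g.unop (act.app U q)) _).trans
      (ConcreteCategory.congr_hom ((act.app U q).naturality (Over.homMk g.unop :
        Over.mk g.unop ⟶ Over.mk (𝟙 U.unop)).op) p)

variable (P) in
noncomputable def intPresheafToEnd : intPresheaf ⟶ endPresheaf P where
  app U := AddCommGrpCat.ofHom
    { toFun k := k.down • 𝟙 _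
      map_zero' := zero_smul ℤ _
      map_add' k l := add_smul k.down l.down _ }
  naturality U V g := by
    ext k : 2
    change k.down • 𝟙 _ = (endPresheaf P).map g (k.down • 𝟙 _)
    exact (map_zsmul ((endPresheaf P).map g).hom k.down (𝟙 _)).symm

noncomputable def presheafTensorUnit (unit : intPresheaf ⟶ Q) : P ⟶ presheafTensorObj P Q where
  app U := AddCommGrpCat.ofHom
    ((TensorProduct.mk ℤ _ _).flip (unit.app U (ULift.up 1))).toAddMonoidHom
  naturality U V g := by
    ext p
    change P.map g p ⊗ₜ unit.app V (ULift.up 1) = P.map g p ⊗ₜ Q.map g (unit.app U (ULift.up 1))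
    rw [← NatTrans.naturality_apply]
    rfl

lemma presheafTensorUnit_comp_presheafTensorAct (unit : intPresheaf ⟶ Q)
    (act : Q ⟶ endPresheaf P) (h : unit ≫ act = intPresheafToEnd P) :
    presheafTensorUnit unit ≫ presheafTensorAct act = 𝟙 P := by
  ext U p
  change ((act.app U (unit.app U (ULift.up 1))).app (op (Over.mk (𝟙 U.unop)))) p = p
  rw [← NatTrans.comp_app_apply, h]
  change ((1 : ℤ) • 𝟙 ((Over.forget U.unop).op ⋙ P)).app (op (Over.mk (𝟙 U.unop))) p = p
  rw [one_smul]
  rfl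

end Action

noncomputable abbrev intSheaf : Sheaf J AddCommGrpCat.{u} :=
  (presheafToSheaf J AddCommGrpCat.{u}).obj intPresheaf

lemma mono_zsmul_id_intSheaf (n : ℤ) (hn : n ≠ 0) : Mono (n • 𝟙 (intSheaf J)) := by
  have : Mono (n • 𝟙 (intPresheaf (C := C))) :=
    (mono_zsmul_id_iff_injective _ n).2 fun _ => smul_right_injective (ULift ℤ) hn
  rw [← (presheafToSheaf J AddCommGrpCat.{u}).map_id intPresheaf, ← Functor.map_zsmul]
  infer_instance

noncomputable def sheafTensorIntUnit (F : Sheaf J AddCommGrpCat.{u}) :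
    F ⟶ sheafTensorObj J F (intSheaf J) :=
  ⟨presheafTensorUnit (toSheafify J intPresheaf) ≫ toSheafify J _⟩

instance isSplitMono_sheafTensorIntUnit (F : Sheaf J AddCommGrpCat.{u}) :
    IsSplitMono (sheafTensorIntUnit J F) := by
  let act := sheafifyLift J (intPresheafToEnd F.obj) (isSheaf_endPresheaf J F.property)
  refine IsSplitMono.mk' ⟨⟨sheafifyLift J (presheafTensorAct act) F.property⟩, ?_⟩
  apply Sheaf.hom_ext
  change presheafTensorUnit _ ≫ toSheafify J _ ≫ sheafifyLift J (presheafTensorAct act) F.property =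
    𝟙 F.obj
  rw [toSheafify_sheafifyLift]
  exact presheafTensorUnit_comp_presheafTensorAct _ _ (toSheafify_sheafifyLift ..)

theorem SheafFlat.sheafTorsionFree {F : Sheaf J AddCommGrpCat.{u}} (hF : SheafFlat J F) :
    SheafTorsionFree J F := by
  intro n hn
  have := hF _ (mono_zsmul_id_intSheaf J n (by omega))
  rw [sheafTensorMap_zsmul_id] at this
  exact Preadditive.mono_zsmul_id_of_mono (sheafTensorIntUnit J F) n

theorem sheaf_flat_iff_torsionFree (F : Sheaf J AddCommGrpCat.{u}) :
    SheafFlat J F ↔ SheafTorsionFree J F :=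
  ⟨SheafFlat.sheafTorsionFree J, SheafTorsionFree.sheafFlat J⟩
end

section
/- Let (C, J) be a small site and let F be a sheaf of abelian groups on (C, J). Then there exists a short exact sequence 0 → P₁ → P₀ → F → 0 in the abelian category of sheaves of abelian groups on (C, J) in which both P₀ and P₁ are torsion-free (equivalently, flat) sheaves. In particular, the category of abelian sheaves has Tor-dimension ≤ 1: every abelian sheaf admits a flat resolution of length 1. -/
/-!
STATEMENT 7: Every sheaf of abelian groups `F` on a small site `(C, J)` fits into a short
exact sequence `0 → P₁ → P₀ → F → 0` of abelian sheaves in which both `P₀` and `P₁` are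
torsion-free (equivalently, flat) sheaves.  In particular every abelian sheaf admits a
flat resolution of length `1`.
-/

open CategoryTheory Limits Opposite

universe u

variable {C : Type u} [SmallCategory C] (J : GrothendieckTopology C)

/-!
Take for `P₀` the sheafification of the presheaf `U ↦ ℤ[F(U)]` of free abelian groups on the
sections of `F`: the counit of the free–forgetful adjunction maps it onto `F`, and it is
torsion-free because free abelian groups are and sheafification preserves monomorphisms.
The kernel `P₁` is then torsion-free as a subsheaf of a torsion-free sheaf.
-/

instance FreeAbelianGroup.instIsAddTorsionFree (A : Type*) :
    IsAddTorsionFree (FreeAbelianGroup A) :=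
  .of_isTorsionFree ℤ _

namespace CategoryTheory

section Preadditive

variable {D E : Type*} [Category D] [Category E] [Preadditive D] [Preadditive E]

lemma mono_zsmul_id_of_mono {X Y : D} (i : X ⟶ Y) [Mono i] (n : ℤ) [Mono (n • 𝟙 Y)] :
    Mono (n • 𝟙 X) := by
  have : Mono ((n • 𝟙 X) ≫ i) := by
    rw [show (n • 𝟙 X) ≫ i = i ≫ (n • 𝟙 Y) by simp]
    exact mono_comp _ _
  exact mono_of_mono _ i

lemma Functor.mono_zsmul_id_obj (L : D ⥤ E) [L.Additive] [L.PreservesMonomorphisms] (X : D)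
    (n : ℤ) [Mono (n • 𝟙 X)] : Mono (n • 𝟙 (L.obj X)) := by
  simpa using L.map_mono (n • 𝟙 X)

lemma NatTrans.mono_zsmul_id {B : Type*} [Category B] (G : B ⥤ D) (n : ℤ)
    [∀ b, Mono (n • 𝟙 (G.obj b))] : Mono (n • 𝟙 G) :=
  have (b : B) : Mono ((n • 𝟙 G).app b) := by simpa using ‹∀ b, Mono (n • 𝟙 (G.obj b))› b
  NatTrans.mono_of_mono_app _

end Preadditive

end CategoryTheory

lemma AddCommGrpCat.mono_zsmul_id (A : AddCommGrpCat) [IsAddTorsionFree A] {n : ℤ} (hn : n ≠ 0) :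
    Mono (n • 𝟙 A) :=
  (AddCommGrpCat.mono_iff_injective _).2 (zsmul_right_injective hn)

variable {J}

lemma SheafTorsionFree.of_mono {P₁ P₀ : Sheaf J AddCommGrpCat.{u}} (i : P₁ ⟶ P₀) [Mono i]
    (h : SheafTorsionFree J P₀) : SheafTorsionFree J P₁ := fun n hn ↦
  have := h n hn
  mono_zsmul_id_of_mono i n

lemma sheafTorsionFree_presheafToSheaf_obj (G : Cᵒᵖ ⥤ AddCommGrpCat.{u})
    [∀ c, IsAddTorsionFree (G.obj c)] : SheafTorsionFree J ((presheafToSheaf J _).obj G) :=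
  fun n hn ↦
  have (c : Cᵒᵖ) : Mono (n • 𝟙 (G.obj c)) := AddCommGrpCat.mono_zsmul_id _ (by omega)
  have := NatTrans.mono_zsmul_id G n
  (presheafToSheaf J _).mono_zsmul_id_obj G n

variable (J)

lemma exists_sheafTorsionFree_epi (F : Sheaf J AddCommGrpCat.{u}) :
    ∃ (P : Sheaf J AddCommGrpCat.{u}) (p : P ⟶ F), Epi p ∧ SheafTorsionFree J P := by
  let G : Cᵒᵖ ⥤ AddCommGrpCat.{u} := F.obj ⋙ forget AddCommGrpCat ⋙ AddCommGrpCat.free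
  let φ : G ⟶ F.obj := F.obj.whiskerLeft AddCommGrpCat.adj.counit ≫ F.obj.rightUnitor.hom
  have : ∀ c, Epi (φ.app c) := fun c ↦ by dsimp [φ]; infer_instance
  have : Epi φ := NatTrans.epi_of_epi_app φ
  have : ∀ c, IsAddTorsionFree (G.obj c) := fun c ↦
    inferInstanceAs (IsAddTorsionFree (FreeAbelianGroup _))
  exact ⟨_, (presheafToSheaf J _).map φ ≫ (sheafificationAdjunction J _).counit.app F,
    epi_comp _ _, sheafTorsionFree_presheafToSheaf_obj G⟩

theorem exists_torsionFree_resolution (F : Sheaf J AddCommGrpCat.{u}) :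
    ∃ (P₁ P₀ : Sheaf J AddCommGrpCat.{u}) (i : P₁ ⟶ P₀) (p : P₀ ⟶ F) (w : i ≫ p = 0),
      (ShortComplex.mk i p w).ShortExact ∧
      SheafTorsionFree J P₀ ∧ SheafTorsionFree J P₁ := by
  obtain ⟨P₀, p, hp, hP₀⟩ := exists_sheafTorsionFree_epi J F
  exact ⟨kernel p, P₀, kernel.ι p, p, kernel.condition p,
    .mk (ShortComplex.exact_of_f_is_kernel _ (kernelIsKernel p)), hP₀, hP₀.of_mono (kernel.ι p)⟩
end
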